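/- Let N ≥ 1, α > 2, β > α - 2 and γ < -N/2 + α/2. Define A u(x) = (1+|x|^α) Δu(x) - |x|^β u(x) and φ(x) = (1+|x|^α)^{γ/α}. Then there exists a constant κ > 0 such that Aφ(x) ≤ κ φ(x) for all x ∈ ℝ^N. -/

import Mathlib

/-!
Writing `∇φ(x) = g(‖x‖) x` with `g r = γ r ^ (α - 2) (1 + r ^ α) ^ (γ / α - 1)`, the Laplacian of
`φ` is `r g'(r) + N g(r)` at `r = ‖x‖ ≠ 0`, while at `x = 0` all second derivatives vanish because
`g r → 0` (this is where `α > 2` enters). Hence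
`(1 + ‖x‖ ^ α) Δφ(x) = γ (α - 2 + N + (γ - α) ‖x‖ ^ α / (1 + ‖x‖ ^ α)) ‖x‖ ^ (α - 2) φ(x)`,
whose coefficient of `‖x‖ ^ (α - 2) φ(x)` is bounded by some `C`. Since `β > α - 2`,
`C r ^ (α - 2) - r ^ β` is bounded above for `r ≥ 0`, which gives `κ`.
-/

open Real Filter Topology Asymptotics
open scoped RealInnerProductSpace

variable {E : Type*} [NormedAddCommGroup E] [InnerProductSpace ℝ E]

theorem hasFDerivAt_norm_of_ne_zero {x : E} (hx : x ≠ 0) :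
    HasFDerivAt (fun y : E => ‖y‖) (‖x‖⁻¹ • innerSL ℝ x) x := by
  have hsqrt := (hasDerivAt_sqrt (by positivity : ‖x‖ ^ 2 ≠ 0)).comp_hasFDerivAt x
    (hasStrictFDerivAt_norm_sq x).hasFDerivAt
  have hfun : ((fun t => √t) ∘ fun y : E => ‖y‖ ^ 2) = fun y => ‖y‖ :=
    funext fun y => sqrt_sq (norm_nonneg y)
  rw [hfun, sqrt_sq (norm_nonneg x)] at hsqrt
  refine hsqrt.congr_fderiv ?_
  ext y
  simp only [smul_apply, smul_eq_mul, nsmul_eq_mul, Nat.cast_ofNat]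
  field_simp

theorem fderiv_radial_mul_inner_apply_self {h : ℝ → ℝ} {h' : ℝ} {x : E} (hx : x ≠ 0)
    (hh : HasDerivAt h h' ‖x‖) (v : E) :
    fderiv ℝ (fun y : E => h ‖y‖ * ⟪y, v⟫) x v = h' * ⟪x, v⟫ ^ 2 / ‖x‖ + h ‖x‖ * ‖v‖ ^ 2 := by
  have hinner : HasFDerivAt (fun y : E => ⟪y, v⟫) (innerSL ℝ v) x := by
    have : (fun y : E => ⟪y, v⟫) = innerSL ℝ v := funext fun y => real_inner_comm v y
    exact this ▸ (innerSL ℝ v).hasFDerivAt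
  have hd : HasFDerivAt (fun y : E => h ‖y‖ * ⟪y, v⟫) _ x :=
    (hh.comp_hasFDerivAt x (hasFDerivAt_norm_of_ne_zero hx)).mul hinner
  rw [hd.fderiv]
  simp only [add_apply, smul_apply, innerSL_apply_apply,
    smul_eq_mul, real_inner_self_eq_norm_sq, real_inner_comm v x, Function.comp_apply]
  field_simp
  ring

theorem fderiv_radial_mul_inner_zero {h : ℝ → ℝ} (hh : Tendsto h (𝓝 0) (𝓝 0)) (v : E) :
    fderiv ℝ (fun y : E => h ‖y‖ * ⟪y, v⟫) 0 = 0 := by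
  refine (HasFDerivAt.of_isLittleO ?_).fderiv
  have hsmall : (fun y : E => h ‖y‖) =o[𝓝 0] (fun _ => (1 : ℝ)) :=
    (isLittleO_one_iff ℝ).2 (hh.comp tendsto_norm_zero)
  have hinner : (fun y : E => ⟪y, v⟫) =O[𝓝 0] (fun y => ‖y‖) :=
    .of_bound ‖v‖ (.of_forall fun y => by
      simpa [mul_comm] using abs_real_inner_le_norm y v)
  refine isLittleO_norm_right.mp ?_
  simpa using hsmall.mul_isBigO hinner

theorem sum_fderiv_radial_mul_inner_single {N : ℕ} {h : ℝ → ℝ} {h' : ℝ}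
    {x : EuclideanSpace ℝ (Fin N)} (hx : x ≠ 0) (hh : HasDerivAt h h' ‖x‖) :
    ∑ i, fderiv ℝ (fun y => h ‖y‖ * ⟪y, EuclideanSpace.single i (1 : ℝ)⟫) x
        (EuclideanSpace.single i 1) = h' * ‖x‖ + N * h ‖x‖ := by
  have hx' : ‖x‖ ≠ 0 := norm_ne_zero_iff.mpr hx
  rw [Finset.sum_congr rfl fun i _ => fderiv_radial_mul_inner_apply_self hx hh _]
  simp [EuclideanSpace.inner_single_right, Finset.sum_add_distrib, ← Finset.sum_div,
    ← Finset.mul_sum, ← EuclideanSpace.real_norm_sq_eq]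
  field_simp

noncomputable def gradCoeff (α γ r : ℝ) : ℝ := γ * r ^ (α - 2) * (1 + r ^ α) ^ (γ / α - 1)

section Profile

variable {α γ : ℝ}

theorem hasFDerivAt_one_add_norm_rpow_rpow (hα : 1 < α) (x : E) :
    HasFDerivAt (fun y : E => (1 + ‖y‖ ^ α) ^ (γ / α)) (gradCoeff α γ ‖x‖ • innerSL ℝ x) x := by
  have hpos : 0 < 1 + ‖x‖ ^ α := by positivity
  refine (((hasFDerivAt_norm_rpow x hα).const_add 1).rpow_const (.inl hpos.ne')).congr_fderiv ?_
  rw [smul_smul, gradCoeff]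
  congr 1
  field_simp

theorem fderiv_one_add_norm_rpow_rpow_apply (hα : 1 < α) (x v : E) :
    fderiv ℝ (fun y : E => (1 + ‖y‖ ^ α) ^ (γ / α)) x v = gradCoeff α γ ‖x‖ * ⟪x, v⟫ := by
  simp [(hasFDerivAt_one_add_norm_rpow_rpow hα x).fderiv]

theorem hasDerivAt_gradCoeff (hα : α ≠ 0) {r : ℝ} (hr : 0 < r) :
    HasDerivAt (gradCoeff α γ)
      (γ * (α - 2 + (γ - α) * (r ^ α / (1 + r ^ α))) * r ^ (α - 3) * (1 + r ^ α) ^ (γ / α - 1))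
      r := by
  have hpos : 0 < 1 + r ^ α := by positivity
  have hd := ((hasDerivAt_rpow_const (p := α - 2) (.inl hr.ne')).const_mul γ).mul
    (((hasDerivAt_rpow_const (p := α) (.inl hr.ne')).const_add 1).rpow_const
      (p := γ / α - 1) (.inl hpos.ne'))
  refine hd.congr_deriv ?_
  have e1 : r ^ (α - 2 - 1) = r ^ (α - 3) := by ring_nf
  have e2 : r ^ (α - 1) = r ^ (α - 3) * r ^ 2 := by
    rw [← rpow_natCast, ← rpow_add hr]; ring_nf
  have e3 : (1 + r ^ α) ^ (γ / α - 1 - 1) = (1 + r ^ α) ^ (γ / α - 1) / (1 + r ^ α) := by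
    rw [rpow_sub_one hpos.ne']
  have e4 : r ^ (α - 2) * r ^ 2 = r ^ α := by
    rw [← rpow_natCast, ← rpow_add hr]; ring_nf
  rw [e1, e2, e3, ← e4]
  field_simp

theorem tendsto_gradCoeff_zero (hα : 2 < α) : Tendsto (gradCoeff α γ) (𝓝 0) (𝓝 0) := by
  have hcont : ContinuousAt (gradCoeff α γ) 0 := by
    unfold gradCoeff
    refine ((continuousAt_rpow_const _ _ (.inr (by linarith))).const_mul γ).mul
      (((continuousAt_rpow_const _ _ (.inr (by linarith))).const_add 1).rpow_const ?_)
    simp [zero_rpow (by linarith : α ≠ 0)]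
  simpa [gradCoeff, zero_rpow (by linarith : α - 2 ≠ 0)] using hcont.tendsto

theorem sum_fderiv_fderiv_one_add_norm_rpow_rpow {N : ℕ} (hα : 2 < α)
    (x : EuclideanSpace ℝ (Fin N)) :
    (1 + ‖x‖ ^ α) * ∑ i, fderiv ℝ (fun y => fderiv ℝ
        (fun z : EuclideanSpace ℝ (Fin N) => (1 + ‖z‖ ^ α) ^ (γ / α)) y
        (EuclideanSpace.single i (1 : ℝ))) x (EuclideanSpace.single i 1)
      = γ * (α - 2 + N + (γ - α) * (‖x‖ ^ α / (1 + ‖x‖ ^ α))) * ‖x‖ ^ (α - 2)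
          * (1 + ‖x‖ ^ α) ^ (γ / α) := by
  simp only [fderiv_one_add_norm_rpow_rpow_apply (by linarith : 1 < α)]
  rcases eq_or_ne x 0 with rfl | hx
  · simp [fderiv_radial_mul_inner_zero (tendsto_gradCoeff_zero hα),
      zero_rpow (by linarith : α - 2 ≠ 0)]
  have hr : 0 < ‖x‖ := norm_pos_iff.mpr hx
  have hpos : 0 < 1 + ‖x‖ ^ α := by positivity
  rw [sum_fderiv_radial_mul_inner_single hx (hasDerivAt_gradCoeff (by linarith) hr), gradCoeff]
  have e1 : ‖x‖ ^ (α - 3) * ‖x‖ = ‖x‖ ^ (α - 2) := by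
    rw [← rpow_add_one hr.ne']; ring_nf
  have e2 : (1 + ‖x‖ ^ α) ^ (γ / α - 1) = (1 + ‖x‖ ^ α) ^ (γ / α) / (1 + ‖x‖ ^ α) :=
    rpow_sub_one hpos.ne' _
  rw [e2, ← e1]
  field_simp
  ring

end Profile

theorem mul_add_mul_le_abs_mul_add_abs {c a b s : ℝ} (ha : 0 ≤ a) (hs₀ : 0 ≤ s) (hs₁ : s ≤ 1) :
    c * (a + b * s) ≤ |c| * (a + |b|) := by
  have hbs : |b * s| ≤ |b| := by
    rw [abs_mul, abs_of_nonneg hs₀]; exact mul_le_of_le_one_right (abs_nonneg b) hs₁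
  calc c * (a + b * s) ≤ |c| * |a + b * s| := (le_abs_self _).trans (abs_mul _ _).le
    _ ≤ |c| * (a + |b|) := by
      gcongr
      exact (abs_add_le _ _).trans (by rw [abs_of_nonneg ha]; linarith)

theorem exists_pos_forall_mul_rpow_sub_rpow_le {a b : ℝ} (ha : 0 ≤ a) (hab : a < b) (C : ℝ) :
    ∃ κ > 0, ∀ r, 0 ≤ r → C * r ^ a - r ^ b ≤ κ := by
  set M := max 1 (|C| ^ (b - a)⁻¹)
  have hM : 0 < M := lt_max_of_lt_left one_pos
  refine ⟨|C| * M ^ a + 1, by positivity, fun r hr => ?_⟩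
  have hCr : C * r ^ a ≤ |C| * r ^ a := by gcongr; exact le_abs_self C
  have hrb : 0 ≤ r ^ b := rpow_nonneg hr b
  rcases le_total r M with hrM | hMr
  · have : r ^ a ≤ M ^ a := rpow_le_rpow hr hrM ha
    nlinarith [abs_nonneg C]
  · have hr₀ : 0 < r := hM.trans_le hMr
    have hC : |C| ≤ r ^ (b - a) := by
      calc |C| = (|C| ^ (b - a)⁻¹) ^ (b - a) := by
            rw [← rpow_mul (abs_nonneg C), inv_mul_cancel₀ (by linarith), rpow_one]
        _ ≤ r ^ (b - a) := by gcongr; exact (le_max_right _ _).trans hMr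
    have : |C| * r ^ a ≤ r ^ b := by
      calc |C| * r ^ a ≤ r ^ (b - a) * r ^ a := by gcongr
        _ = r ^ b := by rw [← rpow_add hr₀]; ring_nf
    nlinarith [abs_nonneg C, rpow_nonneg hM.le a]

theorem stmt2_general (N : ℕ) (α β γ : ℝ) (hα : 2 < α) (hβ : α - 2 < β)
    (φ Aφ : EuclideanSpace ℝ (Fin N) → ℝ)
    (hφ : ∀ x, φ x = (1 + ‖x‖ ^ α) ^ (γ / α))
    (hAφ : ∀ x, Aφ x =
      (1 + ‖x‖ ^ α) *
        (∑ i : Fin N,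
          fderiv ℝ (fun y => fderiv ℝ φ y (EuclideanSpace.single i (1 : ℝ))) x
            (EuclideanSpace.single i (1 : ℝ)))
        - ‖x‖ ^ β * φ x) :
    ∃ κ : ℝ, 0 < κ ∧ ∀ x, Aφ x ≤ κ * φ x := by
  obtain rfl : φ = fun x => (1 + ‖x‖ ^ α) ^ (γ / α) := funext hφ
  obtain ⟨κ, hκ, hbound⟩ := exists_pos_forall_mul_rpow_sub_rpow_le (by linarith) hβ
    (|γ| * (α - 2 + N + |γ - α|))
  refine ⟨κ, hκ, fun x => ?_⟩
  have hpos : 0 < 1 + ‖x‖ ^ α := by positivity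
  have hs₁ : ‖x‖ ^ α / (1 + ‖x‖ ^ α) ≤ 1 := (div_le_one hpos).2 (by linarith)
  have hcoef := mul_add_mul_le_abs_mul_add_abs (c := γ) (b := γ - α)
    (by positivity : 0 ≤ α - 2 + N) (by positivity) hs₁
  rw [hAφ, sum_fderiv_fderiv_one_add_norm_rpow_rpow hα]
  calc _ = (γ * (α - 2 + N + (γ - α) * (‖x‖ ^ α / (1 + ‖x‖ ^ α))) * ‖x‖ ^ (α - 2) - ‖x‖ ^ β)
          * (1 + ‖x‖ ^ α) ^ (γ / α) := by ring
    _ ≤ (|γ| * (α - 2 + N + |γ - α|) * ‖x‖ ^ (α - 2) - ‖x‖ ^ β) * (1 + ‖x‖ ^ α) ^ (γ / α) := by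
      gcongr
    _ ≤ κ * (1 + ‖x‖ ^ α) ^ (γ / α) := by
      gcongr
      exact hbound _ (norm_nonneg x)

theorem stmt2 (N : ℕ) (hN : 1 ≤ N) (α β γ : ℝ) (hα : 2 < α) (hβ : α - 2 < β)
    (hγ : γ < -(N : ℝ) / 2 + α / 2)
    (φ Aφ : EuclideanSpace ℝ (Fin N) → ℝ)
    (hφ : ∀ x, φ x = (1 + ‖x‖ ^ α) ^ (γ / α))
    (hAφ : ∀ x, Aφ x =
      (1 + ‖x‖ ^ α) *
        (∑ i : Fin N,
          fderiv ℝ (fun y => fderiv ℝ φ y (EuclideanSpace.single i (1 : ℝ))) x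
            (EuclideanSpace.single i (1 : ℝ)))
        - ‖x‖ ^ β * φ x) :
    ∃ κ : ℝ, 0 < κ ∧ ∀ x, Aφ x ≤ κ * φ x :=
  stmt2_general N α β γ hα hβ φ Aφ hφ hAφ
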